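/- arXiv:math/0410122 — 2 statements merged into one kernel-verified Lean document; each statement's English description precedes it below -/
import Mathlib

section
/- The quotient of the cube [0,1]³ by the identifications (x,y,0)∼(x,y,1), (x,0,z)∼(x,1,z), (0,y,z)∼(0,y',z) for all y,y', and (1,y,z)∼(1,y,z') for all z,z', is homeomorphic to the 3-sphere S³. -/
/-- The unit cube `[0,1]³`, with coordinates `(x, y, z)`. -/
abbrev Cube : Type := Set.Icc (0:ℝ) 1 × Set.Icc (0:ℝ) 1 × Set.Icc (0:ℝ) 1

/-- The gluing relation on the cube: identify `(x,y,0) ∼ (x,y,1)` (top/bottom),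
`(x,0,z) ∼ (x,1,z)` (left/right), collapse each line `{0}×{y}×[0,1]` on the front
face to a point, and collapse each line `{1}×[0,1]×{z}` on the back face to a point. -/
def cubeRel (a b : Cube) : Prop :=
  (a.1 = b.1 ∧ a.2.1 = b.2.1 ∧ (a.2.2 : ℝ) = 0 ∧ (b.2.2 : ℝ) = 1) ∨
  (a.1 = b.1 ∧ (a.2.1 : ℝ) = 0 ∧ (b.2.1 : ℝ) = 1 ∧ a.2.2 = b.2.2) ∨
  ((a.1 : ℝ) = 0 ∧ (b.1 : ℝ) = 0 ∧ a.2.2 = b.2.2) ∨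
  ((a.1 : ℝ) = 1 ∧ (b.1 : ℝ) = 1 ∧ a.2.1 = b.2.1)

/-- The setoid generated by the gluing relation. -/
def cubeSetoid : Setoid Cube := ⟨Relation.EqvGen cubeRel, Relation.EqvGen.is_equivalence cubeRel⟩

section Aux
open Real Set

noncomputable def toR4 (p : (Set.Icc (0:ℝ) 1 × Set.Icc (0:ℝ) 1 × Set.Icc (0:ℝ) 1)) : Fin 4 → ℝ :=
  ![Real.sin (π/2 * p.1) * Real.cos (2*π * p.2.1),
    Real.sin (π/2 * p.1) * Real.sin (2*π * p.2.1),
    Real.cos (π/2 * p.1) * Real.cos (2*π * p.2.2),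
    Real.cos (π/2 * p.1) * Real.sin (2*π * p.2.2)]

lemma angle_mem (x : Set.Icc (0:ℝ) 1) : π/2 * (x:ℝ) ∈ Icc 0 (π/2) := by
  have h := x.2
  constructor
  · nlinarith [Real.pi_pos, h.1]
  · nlinarith [Real.pi_pos, h.2]

lemma sum_sq (p : (Set.Icc (0:ℝ) 1 × Set.Icc (0:ℝ) 1 × Set.Icc (0:ℝ) 1)) :
    ∑ i, (toR4 p i)^2 = 1 := by
  simp [toR4, Fin.sum_univ_four]
  nlinarith [Real.sin_sq_add_cos_sq (π/2 * (p.1:ℝ)), Real.sin_sq_add_cos_sq (2*π*(p.2.1:ℝ)),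
    Real.sin_sq_add_cos_sq (2*π*(p.2.2:ℝ))]

-- circle lemma
lemma circle_exists (a b : ℝ) (h : a^2 + b^2 = 1) :
    ∃ y : Set.Icc (0:ℝ) 1, Real.cos (2*π*(y:ℝ)) = a ∧ Real.sin (2*π*(y:ℝ)) = b := by
  have ha1 : -1 ≤ a := by nlinarith
  have ha2 : a ≤ 1 := by nlinarith
  have hpi := Real.pi_pos
  have hb2 : Real.sqrt (1 - a^2) = |b| := by
    rw [show (1:ℝ) - a^2 = b^2 by linarith, Real.sqrt_sq_eq_abs]
  rcases le_or_gt 0 b with hb | hb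
  · refine ⟨⟨Real.arccos a / (2*π), ?_, ?_⟩, ?_, ?_⟩
    · exact div_nonneg (Real.arccos_nonneg a) (by positivity)
    · have := Real.arccos_le_pi a
      rw [div_le_one (by positivity)]; linarith
    · rw [show 2*π*(Real.arccos a / (2*π)) = Real.arccos a by field_simp]
      exact Real.cos_arccos ha1 ha2
    · rw [show 2*π*(Real.arccos a / (2*π)) = Real.arccos a by field_simp]
      rw [Real.sin_arccos, hb2, abs_of_nonneg hb]
  · refine ⟨⟨1 - Real.arccos a / (2*π), ?_, ?_⟩, ?_, ?_⟩
    · have := Real.arccos_le_pi a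
      have : Real.arccos a / (2*π) ≤ 1/2 := by
        rw [div_le_iff₀ (by positivity)]; linarith
      linarith
    · have := Real.arccos_nonneg a
      have : 0 ≤ Real.arccos a / (2*π) := by positivity
      linarith
    · rw [show 2*π*(1 - Real.arccos a / (2*π)) = 2*π - Real.arccos a by field_simp]
      rw [Real.cos_sub, Real.cos_two_pi, Real.sin_two_pi]
      simpa using Real.cos_arccos ha1 ha2
    · rw [show 2*π*(1 - Real.arccos a / (2*π)) = 2*π - Real.arccos a by field_simp]
      rw [Real.sin_sub, Real.cos_two_pi, Real.sin_two_pi]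
      rw [Real.sin_arccos, hb2, abs_of_neg hb]; ring

-- angle injectivity up to endpoints
lemma angle_inj (y y' : Set.Icc (0:ℝ) 1)
    (hc : Real.cos (2*π*(y:ℝ)) = Real.cos (2*π*(y':ℝ)))
    (hs : Real.sin (2*π*(y:ℝ)) = Real.sin (2*π*(y':ℝ))) :
    y = y' ∨ ((y:ℝ) = 0 ∧ (y':ℝ) = 1) ∨ ((y:ℝ) = 1 ∧ (y':ℝ) = 0) := by
  have h1 : Real.cos (2*π*(y:ℝ) - 2*π*(y':ℝ)) = 1 := by
    rw [Real.cos_sub, hc, hs, ← sq, ← sq]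
    exact Real.cos_sq_add_sin_sq _
  rcases (Real.cos_eq_one_iff _).1 h1 with ⟨n, hn⟩
  have hpi := Real.pi_pos
  have hyn : (y:ℝ) - (y':ℝ) = n := by
    have : (n:ℝ) * (2*π) = ((y:ℝ) - (y':ℝ)) * (2*π) := by linarith [hn]
    have := mul_right_cancel₀ (by positivity : (2*π:ℝ) ≠ 0) this
    linarith
  have hy := y.2; have hy' := y'.2
  have hn1 : (-1:ℤ) ≤ n := by
    have : (-1:ℝ) ≤ (n:ℝ) := by rw [← hyn]; linarith [hy.1, hy'.2]
    exact_mod_cast this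
  have hn2 : n ≤ 1 := by
    have : (n:ℝ) ≤ 1 := by rw [← hyn]; linarith [hy.2, hy'.1]
    exact_mod_cast this
  interval_cases n
  · right; left
    push_cast at hyn
    constructor <;> linarith [hy.1, hy.2, hy'.1, hy'.2]
  · left; ext; push_cast at hyn; linarith
  · right; right
    push_cast at hyn
    constructor <;> linarith [hy.1, hy.2, hy'.1, hy'.2]

-- f constant on generators
lemma toR4_rel {a b : Cube} (h : cubeRel a b) : toR4 a = toR4 b := by
  have hpi := Real.pi_pos
  unfold toR4
  rcases h with ⟨h1, h2, h3, h4⟩ | ⟨h1, h2, h3, h4⟩ | ⟨h1, h2, h3⟩ | ⟨h1, h2, h3⟩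
  · rw [h1, h2, h3, h4]
    norm_num [Real.cos_two_pi, Real.sin_two_pi]
  · rw [h1, h2, h3, h4]
    norm_num [Real.cos_two_pi, Real.sin_two_pi]
  · rw [h1, h2, h3]
    norm_num
  · rw [h1, h2, h3]
    norm_num [Real.cos_pi_div_two, Real.sin_pi_div_two]

lemma eqvZ (x y : Set.Icc (0:ℝ) 1) {z z' : Set.Icc (0:ℝ) 1}
    (h : z = z' ∨ ((z:ℝ) = 0 ∧ (z':ℝ) = 1) ∨ ((z:ℝ) = 1 ∧ (z':ℝ) = 0)) :
    Relation.EqvGen cubeRel (x, y, z) (x, y, z') := by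
  rcases h with rfl | ⟨h1, h2⟩ | ⟨h1, h2⟩
  · exact .refl _
  · exact .rel _ _ (Or.inl ⟨rfl, rfl, h1, h2⟩)
  · exact .symm _ _ (.rel _ _ (Or.inl ⟨rfl, rfl, h2, h1⟩))

lemma eqvY (x : Set.Icc (0:ℝ) 1) {y y' : Set.Icc (0:ℝ) 1} (z : Set.Icc (0:ℝ) 1)
    (h : y = y' ∨ ((y:ℝ) = 0 ∧ (y':ℝ) = 1) ∨ ((y:ℝ) = 1 ∧ (y':ℝ) = 0)) :
    Relation.EqvGen cubeRel (x, y, z) (x, y', z) := by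
  rcases h with rfl | ⟨h1, h2⟩ | ⟨h1, h2⟩
  · exact .refl _
  · exact .rel _ _ (Or.inr (Or.inl ⟨rfl, h1, h2, rfl⟩))
  · exact .symm _ _ (.rel _ _ (Or.inr (Or.inl ⟨rfl, h2, h1, rfl⟩)))

lemma sin_nonneg' (x : Set.Icc (0:ℝ) 1) : 0 ≤ Real.sin (π/2 * (x:ℝ)) := by
  have h := angle_mem x
  exact Real.sin_nonneg_of_nonneg_of_le_pi h.1 (by linarith [h.2, Real.pi_pos])

lemma cos_nonneg' (x : Set.Icc (0:ℝ) 1) : 0 ≤ Real.cos (π/2 * (x:ℝ)) := by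
  have h := angle_mem x
  exact Real.cos_nonneg_of_mem_Icc ⟨by linarith [h.1, Real.pi_pos], h.2⟩

lemma toR4_inj {a b : Cube} (h : toR4 a = toR4 b) : Relation.EqvGen cubeRel a b := by
  obtain ⟨xa, ya, za⟩ := a
  obtain ⟨xb, yb, zb⟩ := b
  have h0 := congrFun h 0
  have h1 := congrFun h 1
  have h2 := congrFun h 2
  have h3 := congrFun h 3
  simp only [toR4, Matrix.cons_val_zero, Matrix.cons_val_one, Matrix.head_cons] at h0 h1
  have e2 : Real.cos (π/2*(xa:ℝ)) * Real.cos (2*π*(za:ℝ))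
      = Real.cos (π/2*(xb:ℝ)) * Real.cos (2*π*(zb:ℝ)) := by simpa [toR4] using h2
  have e3 : Real.cos (π/2*(xa:ℝ)) * Real.sin (2*π*(za:ℝ))
      = Real.cos (π/2*(xb:ℝ)) * Real.sin (2*π*(zb:ℝ)) := by simpa [toR4] using h3
  -- sin equal
  have hs : Real.sin (π/2*(xa:ℝ)) = Real.sin (π/2*(xb:ℝ)) := by
    have hsq : Real.sin (π/2*(xa:ℝ))^2 = Real.sin (π/2*(xb:ℝ))^2 := by
      have pa := Real.sin_sq_add_cos_sq (2*π*(ya:ℝ))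
      have pb := Real.sin_sq_add_cos_sq (2*π*(yb:ℝ))
      linear_combination (-(Real.sin (π/2*(xa:ℝ))^2)) * pa + (Real.sin (π/2*(xb:ℝ))^2) * pb
        + (Real.sin (π/2*(xa:ℝ)) * Real.cos (2*π*(ya:ℝ)) + Real.sin (π/2*(xb:ℝ)) * Real.cos (2*π*(yb:ℝ))) * h0
        + (Real.sin (π/2*(xa:ℝ)) * Real.sin (2*π*(ya:ℝ)) + Real.sin (π/2*(xb:ℝ)) * Real.sin (2*π*(yb:ℝ))) * h1
    have := sin_nonneg' xa; have := sin_nonneg' xb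
    nlinarith
  have hc : Real.cos (π/2*(xa:ℝ)) = Real.cos (π/2*(xb:ℝ)) := by
    have hsq : Real.cos (π/2*(xa:ℝ))^2 = Real.cos (π/2*(xb:ℝ))^2 := by
      have pa := Real.sin_sq_add_cos_sq (2*π*(za:ℝ))
      have pb := Real.sin_sq_add_cos_sq (2*π*(zb:ℝ))
      linear_combination (-(Real.cos (π/2*(xa:ℝ))^2)) * pa + (Real.cos (π/2*(xb:ℝ))^2) * pb
        + (Real.cos (π/2*(xa:ℝ)) * Real.cos (2*π*(za:ℝ)) + Real.cos (π/2*(xb:ℝ)) * Real.cos (2*π*(zb:ℝ))) * e2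
        + (Real.cos (π/2*(xa:ℝ)) * Real.sin (2*π*(za:ℝ)) + Real.cos (π/2*(xb:ℝ)) * Real.sin (2*π*(zb:ℝ))) * e3
    have := cos_nonneg' xa; have := cos_nonneg' xb
    nlinarith
  have hpi := Real.pi_pos
  have hmem : ∀ x : Set.Icc (0:ℝ) 1, π/2 * (x:ℝ) ∈ Icc 0 π := by
    intro x; have := angle_mem x
    exact ⟨this.1, by linarith [this.2]⟩
  have hx : xa = xb := by
    have := Real.injOn_cos (hmem xa) (hmem xb) hc
    ext
    have : π/2 * (xa:ℝ) = π/2 * (xb:ℝ) := this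
    nlinarith
  subst hx
  -- case on sin/cos vanishing
  by_cases hs0 : Real.sin (π/2*(xa:ℝ)) = 0
  · -- xa = 0 : y is collapsed (same z required), z up to endpoints
    have hx0 : (xa:ℝ) = 0 := by
      have h := angle_mem xa
      rcases Real.sin_eq_zero_iff_of_lt_of_lt (by linarith [h.1] : -π < π/2*(xa:ℝ))
        (by linarith [h.2] : π/2*(xa:ℝ) < π) |>.1 hs0 with heq
      nlinarith
    have hc0 : Real.cos (π/2*(xa:ℝ)) ≠ 0 := by
      rw [hx0]; norm_num
    have hz := angle_inj za zb (mul_left_cancel₀ hc0 e2) (mul_left_cancel₀ hc0 e3)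
    exact .trans _ _ _ (eqvZ xa ya hz)
      (.rel _ _ (Or.inr (Or.inr (Or.inl ⟨hx0, hx0, rfl⟩))))
  · have hy := angle_inj ya yb (mul_left_cancel₀ hs0 h0) (mul_left_cancel₀ hs0 h1)
    by_cases hc0 : Real.cos (π/2*(xa:ℝ)) = 0
    · -- xa = 1 : z collapsed
      have hx1 : (xa:ℝ) = 1 := by
        have h := angle_mem xa
        have : π/2*(xa:ℝ) = π/2 :=
          Real.injOn_cos (hmem xa) (show π/2 ∈ Icc 0 π from ⟨by positivity, by linarith⟩)
            (by rw [hc0, Real.cos_pi_div_two])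
        nlinarith
      exact .trans _ _ _
        (.rel ((xa, ya, za) : Cube) ((xa, ya, zb) : Cube) (Or.inr (Or.inr (Or.inr ⟨hx1, hx1, rfl⟩))))
        (eqvY xa zb hy)
    · have hz := angle_inj za zb (mul_left_cancel₀ hc0 e2) (mul_left_cancel₀ hc0 e3)
      exact .trans _ _ _ (eqvZ xa ya hz) (eqvY xa zb hy)

lemma polar_exists (a b : ℝ) : ∃ y : Set.Icc (0:ℝ) 1,
    Real.sqrt (a^2+b^2) * Real.cos (2*π*(y:ℝ)) = a ∧
    Real.sqrt (a^2+b^2) * Real.sin (2*π*(y:ℝ)) = b := by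
  set r : ℝ := Real.sqrt (a^2+b^2) with hr_def
  have hr0 : 0 ≤ r := Real.sqrt_nonneg _
  have hr2 : r^2 = a^2 + b^2 := Real.sq_sqrt (by positivity)
  rcases eq_or_lt_of_le hr0 with hr | hr
  · have ha : a = 0 := by nlinarith
    have hb : b = 0 := by nlinarith
    exact ⟨⟨0, le_refl _, zero_le_one⟩, by rw [← hr, ha]; ring, by rw [← hr, hb]; ring⟩
  · have hrne : r ≠ 0 := ne_of_gt hr
    obtain ⟨y, h1, h2⟩ := circle_exists (a/r) (b/r) (by
      field_simp
      linarith [hr2])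
    refine ⟨y, ?_, ?_⟩
    · rw [h1]; field_simp
    · rw [h2]; field_simp

lemma x_exists (r r' : ℝ) (hr0 : 0 ≤ r) (hr'0 : 0 ≤ r') (h : r^2 + r'^2 = 1) :
    ∃ x : Set.Icc (0:ℝ) 1, Real.sin (π/2*(x:ℝ)) = r ∧ Real.cos (π/2*(x:ℝ)) = r' := by
  have hpi := Real.pi_pos
  have hr1 : r ≤ 1 := by nlinarith
  have harcsin_mem : Real.arcsin r ∈ Icc 0 (π/2) :=
    ⟨Real.arcsin_nonneg.2 hr0, Real.arcsin_le_pi_div_two r⟩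
  have hb1 : 0 ≤ 2/π * Real.arcsin r := by have := harcsin_mem.1; positivity
  have hb2 : 2/π * Real.arcsin r ≤ 1 := by
    rw [div_mul_eq_mul_div, div_le_one (by positivity)]
    nlinarith [harcsin_mem.2]
  have hang : π/2 * ((⟨2/π * Real.arcsin r, hb1, hb2⟩ : Set.Icc (0:ℝ) 1) : ℝ)
      = Real.arcsin r := by
    show π/2 * (2/π * Real.arcsin r) = _
    field_simp
  refine ⟨⟨2/π * Real.arcsin r, hb1, hb2⟩, ?_, ?_⟩
  · rw [hang]; exact Real.sin_arcsin (by linarith) hr1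
  · rw [hang, Real.cos_arcsin, show 1 - r^2 = r'^2 by linarith, Real.sqrt_sq hr'0]

lemma toR4_surj (v : Fin 4 → ℝ) (hv : ∑ i, (v i)^2 = 1) : ∃ p : Cube, toR4 p = v := by
  have hpi := Real.pi_pos
  have hsum : v 0^2 + v 1^2 + v 2^2 + v 3^2 = 1 := by
    rw [← hv, Fin.sum_univ_four]
  obtain ⟨y, hyc, hys⟩ := polar_exists (v 0) (v 1)
  obtain ⟨z, hzc, hzs⟩ := polar_exists (v 2) (v 3)
  obtain ⟨x, hsin, hcos⟩ := x_exists (Real.sqrt ((v 0)^2+(v 1)^2)) (Real.sqrt ((v 2)^2+(v 3)^2))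
    (Real.sqrt_nonneg _) (Real.sqrt_nonneg _) (by
      rw [Real.sq_sqrt (by positivity), Real.sq_sqrt (by positivity)]; linarith)
  refine ⟨(x, y, z), ?_⟩
  funext i
  fin_cases i <;>
    simp only [toR4, Matrix.cons_val_zero, Matrix.cons_val_one, Matrix.head_cons,
      Matrix.cons_val_two, Matrix.cons_val_three, Matrix.tail_cons, Fin.isValue] <;>
    rw [hsin, hcos] <;> first | exact hyc | exact hys | exact hzc | exact hzs

lemma toR4_eqv {a b : Cube} (h : Relation.EqvGen cubeRel a b) : toR4 a = toR4 b := by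
  induction h with
  | rel _ _ h => exact toR4_rel h
  | refl => rfl
  | symm _ _ _ ih => exact ih.symm
  | trans _ _ _ _ _ ih1 ih2 => exact ih1.trans ih2

lemma toR4_cont : Continuous toR4 := by
  refine continuous_pi fun i => ?_
  fin_cases i <;> simp [toR4] <;> fun_prop

noncomputable def cubeMap (p : Cube) : EuclideanSpace ℝ (Fin 4) :=
  (EuclideanSpace.equiv (Fin 4) ℝ).symm (toR4 p)

lemma cubeMap_norm (p : Cube) : ‖cubeMap p‖ = 1 := by
  rw [EuclideanSpace.norm_eq]
  have : ∀ i, ‖cubeMap p i‖^2 = (toR4 p i)^2 := by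
    intro i
    rw [Real.norm_eq_abs, sq_abs]
    rfl
  simp only [this, sum_sq p, Real.sqrt_one]


end Aux


/-- the quotient of the cube `[0,1]³` by the identifications above is
homeomorphic to the 3-sphere `S³`. -/
theorem stmt_4 :
    Nonempty (Quotient cubeSetoid ≃ₜ Metric.sphere (0 : EuclideanSpace ℝ (Fin 4)) 1) := by
  refine ⟨?_⟩
  set g : Cube → Metric.sphere (0 : EuclideanSpace ℝ (Fin 4)) 1 := fun p =>
    ⟨cubeMap p, by rw [mem_sphere_zero_iff_norm]; exact cubeMap_norm p⟩ with hg_def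
  have hg : ∀ a b : Cube, cubeSetoid.r a b → g a = g b := fun a b h =>
    Subtype.ext (congrArg (EuclideanSpace.equiv (Fin 4) ℝ).symm (toR4_eqv h))
  set G : Quotient cubeSetoid → Metric.sphere (0 : EuclideanSpace ℝ (Fin 4)) 1 :=
    Quotient.lift g hg with hG_def
  have hGc : Continuous G :=
    continuous_quot_lift _ (Continuous.subtype_mk
      (((EuclideanSpace.equiv (Fin 4) ℝ).symm.continuous).comp toR4_cont) _)
  have hGinj : Function.Injective G := by
    rintro ⟨a⟩ ⟨b⟩ h
    refine Quotient.sound (toR4_inj ?_)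
    have h' : cubeMap a = cubeMap b := Subtype.ext_iff.1 h
    exact (EuclideanSpace.equiv (Fin 4) ℝ).symm.injective h'
  have hGsurj : Function.Surjective G := by
    rintro ⟨w, hw⟩
    have hn : ‖w‖ = 1 := mem_sphere_zero_iff_norm.1 hw
    have hsum : ∑ i, (w i)^2 = 1 := by
      rw [EuclideanSpace.norm_eq] at hn
      have := Real.sqrt_eq_one.1 hn
      simpa [Real.norm_eq_abs, sq_abs] using this
    obtain ⟨p, hp⟩ := toR4_surj (fun i => w i) hsum
    refine ⟨⟦p⟧, ?_⟩
    apply Subtype.ext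
    show cubeMap p = w
    ext i
    exact congrFun hp i
  exact Continuous.homeoOfEquivCompactToT2 (f := Equiv.ofBijective G ⟨hGinj, hGsurj⟩) hGc
end

section
/- A closed curve k on the torus with tangent Gauss map g_k : S¹ → ℝP¹ is the projection of a Legendrian knot in the contact structure ζ_n = ker(cos((n+1/2)πx)dz − sin((n+1/2)πx)dy) if and only if g_k lifts to a continuous map g̃_k : S¹ → ℝ with image contained in an open interval (ℓπ, (ℓ+n+1/2)π) for some integer ℓ. -/
/-- Let `g : S¹ → ℝP¹` be the tangent Gauss map of a closed curve `k`
on the torus, where `ℝP¹` is modelled as `ℝ/πℤ` with universal covering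
`p : ℝ → ℝ/πℤ` of period `π`.  The curve `k` is the projection of a Legendrian knot
in `ζ_n = ker(cos((n+1/2)πx)dz − sin((n+1/2)πx)dy)` — i.e. there is a continuous
choice of `x`-coordinate `x : S¹ → (0,1)` with tangent direction
`(n+1/2)·π·x(s)` mod `π` equal to `g(s)` — if and only if
(i) `g` lifts to a continuous map `g̃ : S¹ → ℝ`, and
(ii) the image of `g̃` is contained in `(ℓπ, (ℓ+n+1/2)π)` for some integer `ℓ`. -/
theorem stmt_5 (n : ℕ) (g : AddCircle (1:ℝ) → AddCircle Real.pi) (hg : Continuous g) :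
    (∃ x : AddCircle (1:ℝ) → ℝ, Continuous x ∧ (∀ s, x s ∈ Set.Ioo (0:ℝ) 1) ∧
        ∀ s, g s = ((((n : ℝ) + 1/2) * Real.pi * x s : ℝ) : AddCircle Real.pi)) ↔
    (∃ gt : AddCircle (1:ℝ) → ℝ, Continuous gt ∧
        (∀ s, g s = ((gt s : ℝ) : AddCircle Real.pi)) ∧
        ∃ ℓ : ℤ, ∀ s, gt s ∈
          Set.Ioo ((ℓ : ℝ) * Real.pi) (((ℓ : ℝ) + (n : ℝ) + 1/2) * Real.pi)) := by
  have hc : (0:ℝ) < ((n : ℝ) + 1/2) * Real.pi := by positivity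
  constructor
  · rintro ⟨x, hx, hx01, hgx⟩
    refine ⟨fun s => ((n : ℝ) + 1/2) * Real.pi * x s, by continuity, hgx, 0, fun s => ?_⟩
    obtain ⟨h0, h1⟩ := hx01 s
    constructor
    · simpa using mul_pos hc h0
    · push_cast
      calc ((n : ℝ) + 1/2) * Real.pi * x s < ((n : ℝ) + 1/2) * Real.pi * 1 := by
            exact mul_lt_mul_of_pos_left h1 hc
        _ = (0 + (n : ℝ) + 1/2) * Real.pi := by ring
  · rintro ⟨gt, hgt, hggt, ℓ, hmem⟩
    refine ⟨fun s => (gt s - ℓ * Real.pi) / (((n : ℝ) + 1/2) * Real.pi),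
      by continuity, fun s => ?_, fun s => ?_⟩
    · obtain ⟨h0, h1⟩ := hmem s
      constructor
      · exact div_pos (by linarith) hc
      · rw [div_lt_one hc]
        nlinarith [Real.pi_pos]
    · have key : ((n : ℝ) + 1/2) * Real.pi *
          ((gt s - ℓ * Real.pi) / (((n : ℝ) + 1/2) * Real.pi)) = gt s - ℓ * Real.pi := by
        field_simp
      rw [hggt s, key]
      have h0 : (((ℓ : ℝ) * Real.pi : ℝ) : AddCircle Real.pi) = 0 := by
        rw [AddCircle.coe_eq_zero_iff]
        exact ⟨ℓ, by simp [zsmul_eq_mul]⟩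
      have hsub : ((gt s - (ℓ : ℝ) * Real.pi : ℝ) : AddCircle Real.pi) =
          ((gt s : ℝ) : AddCircle Real.pi) - (((ℓ : ℝ) * Real.pi : ℝ) : AddCircle Real.pi) := rfl
      rw [hsub, h0, sub_zero]
end
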